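/- Let Λ be a K-stone finite-dimensional K-algebra, let S and T be bricks in mod Λ such that S ⊔ T[1] is a semibrick pair, and let f : T ↪ S be a monomorphism. Then coker(f) is a brick, dim_K Hom_Λ(S, coker f) = 1, and Hom_Λ(T, coker f) = 0 = Hom_Λ(coker f, T). -/

import Mathlib

/-!
Write `Q = S ⧸ f(T)` and `p : S → Q`. As `Ext¹(S, T) = 0`, every map `S → Q` lifts through `p` to an
endomorphism of `S`, which is a scalar since `S` is a `K`-stone; so `Hom(S, Q) = K p`, and as `p`
is onto, `End(Q) = K`. `Q ≠ 0` because `Hom(S, T) = 0` rules out `f` being an isomorphism, so `Q`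
is a brick, hence a `K`-stone. `Hom(Q, T) = 0` because `Hom(S, T) = 0` and `p` is onto. Finally
`Ext¹(Q, Q) = 0` lets every map `T → Q` extend along `f` to a map `S → Q`, which is a multiple of
`p` and so vanishes on `T`.
-/

open CategoryTheory

attribute [local instance] HasDerivedCategory.standard

namespace CategoryTheory.Triangulated

open Limits Pretriangulated

/-- Triangulated subcategory (the Mathlib structure of December 2024, since removed). -/
structure Subcategory (C : Type*) [Category C] [HasZeroObject C] [HasShift C ℤ]
    [Preadditive C] [∀ n : ℤ, (shiftFunctor C n).Additive] [Pretriangulated C] where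
  P : C → Prop
  zero' : ∃ (Z : C) (_ : IsZero Z), P Z
  shift (X : C) (n : ℤ) : P X → P (X⟦n⟧)
  ext₂' (T : Triangle C) (_ : T ∈ distTriang C) : P T.obj₁ → P T.obj₃ →
    ∃ (Y : C) (_ : P Y), Nonempty (T.obj₂ ≅ Y)

end CategoryTheory.Triangulated

namespace Paper

variable (K Λ : Type) [Field K] [Ring Λ] [Algebra K Λ] [FiniteDimensional K Λ]

/-- A brick: a finite module whose endomorphism ring is a division ring. -/
def IsBrick (S : ModuleCat.{0} Λ) : Prop :=
  Module.Finite Λ S ∧ Nontrivial S ∧ ∀ f : S →ₗ[Λ] S, f ≠ 0 → Function.Bijective f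

/-- Hom_Λ(A,B) = 0. -/
def NoHom (A B : ModuleCat.{0} Λ) : Prop := ∀ f : A →ₗ[Λ] B, f = 0

/-- Ext¹_Λ(A,B) = 0 : every short exact sequence 0 → B → E → A → 0 splits. -/
def Ext1Vanish (A B : ModuleCat.{0} Λ) : Prop :=
  ∀ (E : ModuleCat.{0} Λ) (i : B →ₗ[Λ] E) (p : E →ₗ[Λ] A),
    Function.Injective i → Function.Surjective p → LinearMap.range i = LinearMap.ker p →
    ∃ s : A →ₗ[Λ] E, p.comp s = LinearMap.id

/-- A semibrick: a set of bricks which are pairwise hom-orthogonal. -/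
def IsSemibrick (D : Set (ModuleCat.{0} Λ)) : Prop :=
  (∀ S ∈ D, IsBrick Λ S) ∧ ∀ S ∈ D, ∀ T ∈ D, S ≠ T → NoHom Λ S T ∧ NoHom Λ T S

/-- A semibrick pair `D ⊔ U[1]`. -/
def IsSemibrickPair (D U : Set (ModuleCat.{0} Λ)) : Prop :=
  IsSemibrick Λ D ∧ IsSemibrick Λ U ∧
    ∀ S ∈ D, ∀ T ∈ U, NoHom Λ S T ∧ Ext1Vanish Λ S T

/-- `Y` is a direct summand (retract) of `X`. -/
def IsRetractOf {C : Type*} [Category C] (Y X : C) : Prop :=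
  ∃ (s : Y ⟶ X) (r : X ⟶ Y), s ≫ r = 𝟙 Y

/-- `D ⊔ U[1]` is a 2-term simple minded collection: it is a semibrick pair and the
smallest triangulated subcategory of `D^b(mod Λ)` (realized as the objects of the derived
category of `Mod Λ` with bounded, finitely generated homology) containing
`{S : S ∈ D} ∪ {T[1] : T ∈ U}` and closed under direct summands is all of `D^b(mod Λ)`. -/
def IsTwoTermSMC (D U : Set (ModuleCat.{0} Λ)) : Prop :=
  IsSemibrickPair Λ D U ∧
  ∀ (S : Triangulated.Subcategory (DerivedCategory (ModuleCat.{0} Λ))),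
    (∀ X Y, S.P X → IsRetractOf Y X → S.P Y) →
    (∀ M ∈ D, S.P ((DerivedCategory.singleFunctor (ModuleCat.{0} Λ) 0).obj M)) →
    (∀ M ∈ U, S.P (((DerivedCategory.singleFunctor (ModuleCat.{0} Λ) 0).obj M)⟦(1:ℤ)⟧)) →
    ∀ Z : DerivedCategory (ModuleCat.{0} Λ),
      (∃ a b : ℤ, ∀ n : ℤ, (n < a ∨ b < n) →
        Subsingleton ((DerivedCategory.homologyFunctor (ModuleCat.{0} Λ) n).obj Z)) →
      (∀ n : ℤ, Module.Finite Λ ((DerivedCategory.homologyFunctor (ModuleCat.{0} Λ) n).obj Z)) →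
      S.P Z

/-- `D ⊆ D'` up to isomorphism. -/
def SubsetUpToIso (D D' : Set (ModuleCat.{0} Λ)) : Prop :=
  ∀ S ∈ D, ∃ S' ∈ D', Nonempty (S ≅ S')

/-- The semibrick pair `D ⊔ U[1]` is completable. -/
def Completable (D U : Set (ModuleCat.{0} Λ)) : Prop :=
  ∃ D' U', IsTwoTermSMC Λ D' U' ∧ SubsetUpToIso Λ D D' ∧ SubsetUpToIso Λ U U'

/-- The semibrick pair `D ⊔ U[1]` is pairwise completable. -/
def PairwiseCompletable (D U : Set (ModuleCat.{0} Λ)) : Prop :=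
  ∀ S ∈ D, ∀ T ∈ U, ∃ D' U', IsTwoTermSMC Λ D' U' ∧
    (∃ S' ∈ D', Nonempty (S ≅ S')) ∧ (∃ T' ∈ U', Nonempty (T ≅ T'))

/-- `Λ` has the pairwise 2-simple minded completability property. -/
def PairwiseCompletabilityProperty : Prop :=
  ∀ D U : Set (ModuleCat.{0} Λ), IsSemibrickPair Λ D U →
    PairwiseCompletable Λ D U → Completable Λ D U

/-- `Λ` is τ-tilting finite: only finitely many bricks up to isomorphism. -/
def TauTiltingFinite : Prop :=
  ∃ (n : ℕ) (f : Fin n → ModuleCat.{0} Λ),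
    ∀ M : ModuleCat.{0} Λ, IsBrick Λ M → ∃ i, Nonempty (M ≅ f i)

/-- `rk Λ = n` : there are exactly `n` isomorphism classes of simple `Λ`-modules. -/
def AlgebraRank (n : ℕ) : Prop :=
  ∃ f : Fin n → ModuleCat.{0} Λ,
    (∀ i, IsSimpleModule Λ (f i)) ∧
    (∀ i j, i ≠ j → ¬ Nonempty (f i ≅ f j)) ∧
    (∀ M : ModuleCat.{0} Λ, IsSimpleModule Λ M → ∃ i, Nonempty (M ≅ f i))

/-- `X` belongs to `Filt(C)` : it has a finite filtration whose subquotients are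
isomorphic to members of `C`. -/
def FiltClass (C : Set (ModuleCat.{0} Λ)) (X : ModuleCat.{0} Λ) : Prop :=
  ∃ (n : ℕ) (c : Fin (n + 1) → Submodule Λ X),
    c 0 = ⊥ ∧ c (Fin.last n) = ⊤ ∧ (∀ i : Fin n, c i.castSucc ≤ c i.succ) ∧
    ∀ i : Fin n, ∃ Z ∈ C,
      Nonempty ((↥(c i.succ) ⧸ (Submodule.comap (c i.succ).subtype (c i.castSucc))) ≃ₗ[Λ] Z)

/-- `X ∈ Filt(S)` for a single module `S`. -/
def IsFiltBy (S X : ModuleCat.{0} Λ) : Prop := FiltClass Λ {S} X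

/-- `f : T → A` is a minimal left `Filt(S)`-approximation. -/
def IsMinimalLeftFiltApprox (S T A : ModuleCat.{0} Λ) (f : T →ₗ[Λ] A) : Prop :=
  IsFiltBy Λ S A ∧
  (∀ N : ModuleCat.{0} Λ, IsFiltBy Λ S N → ∀ j : T →ₗ[Λ] N,
      ∃ h : A →ₗ[Λ] N, h.comp f = j) ∧
  (∀ h : A →ₗ[Λ] A, h.comp f = f → Function.Bijective h)

/-- The semibrick pair `D ⊔ U[1]` is singly left mutation compatible at `S ∈ D`. -/
def SinglyLeftCompatAt (D U : Set (ModuleCat.{0} Λ)) (S : ModuleCat.{0} Λ) : Prop :=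
  S ∈ D ∧ ∀ T ∈ U, ∃ (A : ModuleCat.{0} Λ) (g : T →ₗ[Λ] A),
    IsMinimalLeftFiltApprox Λ S T A g ∧ (Function.Injective g ∨ Function.Surjective g)

/-- The short exact sequence `0 → A → E → T → 0` (with `A ∈ Filt S`) corresponds to the
minimal left `Filt(S)`-approximation `T[-1] → A` in `D^b(mod Λ)` : every extension of `T`
by a module of `Filt(S)` is a pushout of it, and it is left minimal. -/
def IsMinimalExtApprox (S T A E : ModuleCat.{0} Λ) (i : A →ₗ[Λ] E) (p : E →ₗ[Λ] T) : Prop :=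
  IsFiltBy Λ S A ∧ Function.Injective i ∧ Function.Surjective p ∧
    LinearMap.range i = LinearMap.ker p ∧
  (∀ (N F : ModuleCat.{0} Λ) (j : N →ₗ[Λ] F) (q : F →ₗ[Λ] T), IsFiltBy Λ S N →
      Function.Injective j → Function.Surjective q → LinearMap.range j = LinearMap.ker q →
      ∃ (h : A →ₗ[Λ] N) (φ : E →ₗ[Λ] F), j.comp h = φ.comp i ∧ q.comp φ = p) ∧
  (∀ h : A →ₗ[Λ] A,
      (∃ φ : E →ₗ[Λ] E, i.comp h = φ.comp i ∧ p.comp φ = p) → Function.Bijective h)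

/-- `D' ⊔ U'[1]` is the left mutation `μ_S^+(D ⊔ U[1])` of the semibrick pair `D ⊔ U[1]`
at `S ∈ D`. -/
def IsLeftMutation (S : ModuleCat.{0} Λ) (D U D' U' : Set (ModuleCat.{0} Λ)) : Prop :=
  SinglyLeftCompatAt Λ D U S ∧
  (∀ R : ModuleCat.{0} Λ, R ∈ D' ↔
    ((∃ T ∈ D, T ≠ S ∧ ∃ (A : ModuleCat.{0} Λ) (i : A →ₗ[Λ] R) (p : R →ₗ[Λ] T),
        IsMinimalExtApprox Λ S T A R i p) ∨
     (∃ T ∈ U, ∃ (A : ModuleCat.{0} Λ) (g : T →ₗ[Λ] A),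
        IsMinimalLeftFiltApprox Λ S T A g ∧ Function.Injective g ∧ ¬ Function.Surjective g ∧
        Nonempty (R ≅ ModuleCat.of Λ (A ⧸ LinearMap.range g))))) ∧
  (∀ R : ModuleCat.{0} Λ, R ∈ U' ↔
    (Nonempty (R ≅ S) ∨
     ∃ T ∈ U, ∃ (A : ModuleCat.{0} Λ) (g : T →ₗ[Λ] A),
        IsMinimalLeftFiltApprox Λ S T A g ∧ Function.Surjective g ∧ ¬ Function.Injective g ∧
        Nonempty (R ≅ ModuleCat.of Λ (LinearMap.ker g))))

/-- One left mutation step between semibrick pairs. -/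
def MutStep (X Y : Set (ModuleCat.{0} Λ) × Set (ModuleCat.{0} Λ)) : Prop :=
  ∃ S : ModuleCat.{0} Λ, IsLeftMutation Λ S X.1 X.2 Y.1 Y.2

/-- The semibrick pair `D ⊔ U[1]` is mutation compatible. -/
def MutationCompatible (D U : Set (ModuleCat.{0} Λ)) : Prop :=
  U = ∅ ∨ ∃ U' : Set (ModuleCat.{0} Λ),
    Relation.ReflTransGen (MutStep Λ) (D, U) (∅, U')

/-- `S` is a `K`-stone: a brick with `End(S) ≅ K` and no self-extensions. -/
def IsKStone (S : ModuleCat.{0} Λ) : Prop :=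
  IsBrick Λ S ∧ (∀ f : S →ₗ[Λ] S, ∃ c : K, ∀ x : S, f x = (algebraMap K Λ c) • x) ∧
    Ext1Vanish Λ S S

/-- `Λ` is a `K`-stone algebra. -/
def KStoneAlgebra : Prop := ∀ S : ModuleCat.{0} Λ, IsBrick Λ S → IsKStone K Λ S

/-- `dim_K Hom_Λ(T,A) = 1`. -/
def HomDimOne (T A : ModuleCat.{0} Λ) : Prop :=
  ∃ f : T →ₗ[Λ] A, f ≠ 0 ∧
    ∀ g : T →ₗ[Λ] A, ∃ c : K, ∀ x : T, g x = (algebraMap K Λ c) • f x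

/-- A wide subcategory of `mod Λ` : a class of finite modules closed under isomorphism,
kernels, cokernels and extensions. -/
def IsWide (W : Set (ModuleCat.{0} Λ)) : Prop :=
  (∀ M ∈ W, Module.Finite Λ M) ∧
  (∀ M ∈ W, ∀ N : ModuleCat.{0} Λ, Nonempty (M ≅ N) → N ∈ W) ∧
  (∀ M ∈ W, ∀ N ∈ W, ∀ f : M →ₗ[Λ] N, ModuleCat.of Λ (LinearMap.ker f) ∈ W) ∧
  (∀ M ∈ W, ∀ N ∈ W, ∀ f : M →ₗ[Λ] N, ModuleCat.of Λ (N ⧸ LinearMap.range f) ∈ W) ∧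
  (∀ (A E B : ModuleCat.{0} Λ), A ∈ W → B ∈ W → Module.Finite Λ E →
    ∀ (i : A →ₗ[Λ] E) (p : E →ₗ[Λ] B), Function.Injective i → Function.Surjective p →
      LinearMap.range i = LinearMap.ker p → E ∈ W)

/-- A simple object of the wide subcategory `W`. -/
def IsWSimple (W : Set (ModuleCat.{0} Λ)) (M : ModuleCat.{0} Λ) : Prop :=
  M ∈ W ∧ Nontrivial M ∧
    ∀ N : Submodule Λ M, ModuleCat.of Λ N ∈ W → N = ⊥ ∨ N = ⊤

/-- The wide subcategory `W` has rank `n`: it has exactly `n` isomorphism classes of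
simple objects. -/
def WideRank (W : Set (ModuleCat.{0} Λ)) (n : ℕ) : Prop :=
  ∃ f : Fin n → ModuleCat.{0} Λ,
    (∀ i, IsWSimple Λ W (f i)) ∧
    (∀ i j, i ≠ j → ¬ Nonempty (f i ≅ f j)) ∧
    (∀ M : ModuleCat.{0} Λ, IsWSimple Λ W M → ∃ i, Nonempty (M ≅ f i))

/-- The smallest wide subcategory containing a class `C` of modules. -/
def smallestWide (C : Set (ModuleCat.{0} Λ)) : Set (ModuleCat.{0} Λ) :=
  {M | ∀ W : Set (ModuleCat.{0} Λ), IsWide Λ W → C ⊆ W → M ∈ W}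

/-- `X ∈ Fac(C)` : `X` is a quotient of a finite direct sum of members of `C`. -/
def FacClass (C : Set (ModuleCat.{0} Λ)) (X : ModuleCat.{0} Λ) : Prop :=
  ∃ (n : ℕ) (f : Fin n → ModuleCat.{0} Λ), (∀ i, f i ∈ C) ∧
    ∃ p : ((i : Fin n) → f i) →ₗ[Λ] X, Function.Surjective p

/-- `X ∈ Sub(C)` : `X` is a submodule of a finite direct sum of members of `C`. -/
def SubClass (C : Set (ModuleCat.{0} Λ)) (X : ModuleCat.{0} Λ) : Prop :=
  ∃ (n : ℕ) (f : Fin n → ModuleCat.{0} Λ), (∀ i, f i ∈ C) ∧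
    ∃ j : X →ₗ[Λ] ((i : Fin n) → f i), Function.Injective j

/-- An indecomposable module. -/
def Indec (M : ModuleCat.{0} Λ) : Prop :=
  Nontrivial M ∧ ∀ N₁ N₂ : Submodule Λ M, IsCompl N₁ N₂ → N₁ = ⊥ ∨ N₂ = ⊥

/-- The `K`-stone condition `End_Λ(M) ≅ K`. -/
def EndIsScalar (M : ModuleCat.{0} Λ) : Prop :=
  ∀ φ : M →ₗ[Λ] M, ∃ c : K, ∀ x : M, φ x = algebraMap K Λ c • x

section

variable {K Λ}

omit [FiniteDimensional K Λ]

theorem Ext1Vanish.exists_retraction {A B E : ModuleCat.{0} Λ} (h : Ext1Vanish Λ A B)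
    {i : B →ₗ[Λ] E} {p : E →ₗ[Λ] A} (hi : Function.Injective i) (hp : Function.Surjective p)
    (hip : Function.Exact i p) : ∃ r : E →ₗ[Λ] B, r ∘ₗ i = LinearMap.id :=
  ((hip.split_tfae hi hp).out 0 1).mp (h E i p hi hp hip.linearMap_ker_eq.symm)

/-- Split the pullback of `M → M ⧸ T` along `γ`. -/
theorem Ext1Vanish.exists_lift_mkQ {X T M : ModuleCat.{0} Λ} (h : Ext1Vanish Λ X T)
    {f : T →ₗ[Λ] M} (hf : Function.Injective f) (γ : X →ₗ[Λ] M ⧸ LinearMap.range f) :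
    ∃ ψ : X →ₗ[Λ] M, (LinearMap.range f).mkQ ∘ₗ ψ = γ := by
  let P := LinearMap.ker (γ.coprod (-(LinearMap.range f).mkQ))
  have mem_P : ∀ z : X × M, z ∈ P ↔ γ z.1 = (LinearMap.range f).mkQ z.2 := by
    simp [P, ← sub_eq_add_neg, sub_eq_zero]
  let i : T →ₗ[Λ] P := (LinearMap.inr Λ X M ∘ₗ f).codRestrict P fun t => by
    simp [mem_P, eq_comm (a := (0 : M ⧸ _))]
  let p : P →ₗ[Λ] X := LinearMap.fst Λ X M ∘ₗ P.subtype
  have hi : Function.Injective i := fun t t' htt' => hf congr(($htt' : X × M).2)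
  have hp : Function.Surjective p := fun x => by
    obtain ⟨m, hm⟩ := (LinearMap.range f).mkQ_surjective (γ x)
    exact ⟨⟨(x, m), (mem_P (x, m)).mpr hm.symm⟩, rfl⟩
  have hip : LinearMap.range i = LinearMap.ker p := by
    ext y
    constructor
    · rintro ⟨t, rfl⟩
      rfl
    · intro hy
      have hy₁ : (y : X × M).1 = 0 := hy
      obtain ⟨t, ht⟩ : (y : X × M).2 ∈ LinearMap.range f := by
        simpa [hy₁, eq_comm (a := (0 : M ⧸ _))] using (mem_P y).mp y.2
      exact ⟨t, Subtype.ext (Prod.ext hy₁.symm ht)⟩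
  obtain ⟨σ, hσ⟩ := h (ModuleCat.of Λ P) i p hi hp hip
  refine ⟨LinearMap.snd Λ X M ∘ₗ P.subtype ∘ₗ σ, LinearMap.ext fun x => ?_⟩
  have hσx : ((σ x : P) : X × M).1 = x := LinearMap.congr_fun hσ x
  simpa [hσx] using ((mem_P _).mp (σ x).2).symm

/-- Split the pushout of `T → M` along `g`. -/
theorem Ext1Vanish.exists_extend {T M Y : ModuleCat.{0} Λ} {f : T →ₗ[Λ] M}
    (hf : Function.Injective f) (h : Ext1Vanish Λ (ModuleCat.of Λ (M ⧸ LinearMap.range f)) Y)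
    (g : T →ₗ[Λ] Y) : ∃ ψ : M →ₗ[Λ] Y, ψ ∘ₗ f = g := by
  let R := LinearMap.range (f.prod (-g))
  have mem_R : ∀ t, (f t, -g t) ∈ R := fun t => ⟨t, rfl⟩
  let j : Y →ₗ[Λ] (M × Y) ⧸ R := R.mkQ ∘ₗ LinearMap.inr Λ M Y
  let q : (M × Y) ⧸ R →ₗ[Λ] M ⧸ LinearMap.range f :=
    R.liftQ ((LinearMap.range f).mkQ ∘ₗ LinearMap.fst Λ M Y) (by rintro _ ⟨t, rfl⟩; simp)
  have hj : Function.Injective j := by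
    rw [← LinearMap.ker_eq_bot, LinearMap.ker_eq_bot']
    rintro y hy
    obtain ⟨t, ht⟩ := (Submodule.Quotient.mk_eq_zero R).mp hy
    obtain rfl : t = 0 := hf (by simpa using congr(($ht).1))
    simpa using congr(($ht).2).symm
  have hq : Function.Surjective q :=
    .of_comp (g := R.mkQ) ((Submodule.mkQ_surjective _).comp Prod.fst_surjective)
  have hjq : Function.Exact j q := by
    intro e
    constructor
    · obtain ⟨⟨m, y⟩, rfl⟩ := R.mkQ_surjective e
      intro he
      obtain ⟨t, rfl⟩ : m ∈ LinearMap.range f := (Submodule.Quotient.mk_eq_zero _).mp he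
      refine ⟨y + g t, (Submodule.Quotient.eq R).mpr ?_⟩
      convert R.neg_mem (mem_R t) using 1
      simp
    · rintro ⟨y, rfl⟩
      simp [j, q]
  obtain ⟨r, hr⟩ := h.exists_retraction (E := ModuleCat.of Λ ((M × Y) ⧸ R)) hj hq hjq
  refine ⟨r ∘ₗ R.mkQ ∘ₗ LinearMap.inl Λ M Y, LinearMap.ext fun t => ?_⟩
  have hft : R.mkQ (f t, 0) = j (g t) := by
    refine (Submodule.Quotient.eq R).mpr ?_
    simpa using mem_R t
  simpa [hft] using LinearMap.congr_fun hr (g t)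

theorem NoHom.of_surjective {S Q T : ModuleCat.{0} Λ} (h : NoHom Λ S T) {p : S →ₗ[Λ] Q}
    (hp : Function.Surjective p) : NoHom Λ Q T :=
  fun _ => (LinearMap.cancel_right hp).mp ((h _).trans (LinearMap.zero_comp p).symm)

theorem NoHom.range_ne_top {S T : ModuleCat.{0} Λ} [Nontrivial T] (h : NoHom Λ S T)
    {f : T →ₗ[Λ] S} (hf : Function.Injective f) : LinearMap.range f ≠ ⊤ := by
  intro htop
  let e := LinearEquiv.ofBijective f ⟨hf, LinearMap.range_eq_top.mp htop⟩
  obtain ⟨t, ht⟩ := exists_ne (0 : T)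
  apply ht
  rw [← e.symm_apply_apply t]
  exact LinearMap.congr_fun (h e.symm.toLinearMap) (e t)

theorem isBrick_of_endIsScalar {Q : ModuleCat.{0} Λ} [Module.Finite Λ Q] [Nontrivial Q]
    (hQ : EndIsScalar K Λ Q) : IsBrick Λ Q := by
  refine ⟨‹_›, ‹_›, fun φ hφ => ?_⟩
  obtain ⟨c, hc⟩ := hQ φ
  have hc₀ : c ≠ 0 := by
    rintro rfl
    exact hφ (LinearMap.ext fun x => by simp [hc])
  rw [show ⇑φ = fun x => algebraMap K Λ c • x from funext hc]
  exact ((Units.mk0 c hc₀).isUnit.map (algebraMap K Λ)).smul_bijective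

theorem endIsScalar_of_surjective {S Q : ModuleCat.{0} Λ} {p : S →ₗ[Λ] Q}
    (hp : Function.Surjective p) (h : ∀ γ : S →ₗ[Λ] Q, ∃ c : K, ∀ x, γ x = algebraMap K Λ c • p x) :
    EndIsScalar K Λ Q := fun φ =>
  (h (φ ∘ₗ p)).imp fun _ hc => hp.forall.mpr hc

theorem EndIsScalar.exists_eq_smul_mkQ {S T : ModuleCat.{0} Λ} (hS : EndIsScalar K Λ S)
    (hST : Ext1Vanish Λ S T) {f : T →ₗ[Λ] S} (hf : Function.Injective f)
    (γ : S →ₗ[Λ] S ⧸ LinearMap.range f) :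
    ∃ c : K, ∀ x, γ x = algebraMap K Λ c • (LinearMap.range f).mkQ x := by
  obtain ⟨ψ, rfl⟩ := hST.exists_lift_mkQ hf γ
  obtain ⟨c, hc⟩ := hS ψ
  exact ⟨c, fun x => by simp [hc]⟩

end

/-- over a `K`-stone algebra, for a semibrick pair `S ⊔ T[1]` and a
monomorphism `f : T ↪ S`, the cokernel of `f` is a brick, `dim_K Hom(S, coker f) = 1`,
and `Hom(T, coker f) = 0 = Hom(coker f, T)`. -/
theorem coker_of_mono (hK : KStoneAlgebra K Λ)
    (S T : ModuleCat.{0} Λ) (h : IsSemibrickPair Λ {S} {T})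
    (f : T →ₗ[Λ] S) (hf : Function.Injective f) :
    IsBrick Λ (ModuleCat.of Λ (S ⧸ LinearMap.range f)) ∧
    HomDimOne K Λ S (ModuleCat.of Λ (S ⧸ LinearMap.range f)) ∧
    NoHom Λ T (ModuleCat.of Λ (S ⧸ LinearMap.range f)) ∧
    NoHom Λ (ModuleCat.of Λ (S ⧸ LinearMap.range f)) T := by
  obtain ⟨⟨hS, -⟩, ⟨hT, -⟩, hST⟩ := h
  obtain ⟨hNoHom, hExt⟩ := hST S rfl T rfl
  have : Module.Finite Λ S := (hS S rfl).1
  have : Nontrivial T := (hT T rfl).2.1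
  set Q := ModuleCat.of Λ (S ⧸ LinearMap.range f)
  set p := (LinearMap.range f).mkQ
  have : Nontrivial Q := Submodule.Quotient.nontrivial_iff.mpr (hNoHom.range_ne_top hf)
  have hp : ∀ γ : S →ₗ[Λ] Q, ∃ c : K, ∀ x, γ x = algebraMap K Λ c • p x :=
    EndIsScalar.exists_eq_smul_mkQ (hK S (hS S rfl)).2.1 hExt hf
  have hQ : IsBrick Λ Q :=
    isBrick_of_endIsScalar (endIsScalar_of_surjective (Submodule.mkQ_surjective _) hp)
  refine ⟨hQ, ⟨p, ?_, hp⟩, ?_, hNoHom.of_surjective (Submodule.mkQ_surjective _)⟩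
  · exact LinearMap.ne_zero_of_surjective (Submodule.mkQ_surjective _)
  · intro g
    obtain ⟨ψ, rfl⟩ := (hK Q hQ).2.2.exists_extend hf g
    obtain ⟨c, hc⟩ := hp ψ
    ext t
    simp [hc, p, (Submodule.Quotient.mk_eq_zero _).mpr (LinearMap.mem_range_self f t)]

end Paper
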